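/- (Zero Frequency Deviation) Consider a connected network graph with node set V partitioned into generator/inverter nodes V_GI and load nodes V_L, with damping coefficients A_i > 0. Suppose at equilibrium: (a) the angle dynamics give D_pᵀ ω* = 0 (frequency synchronization on a connected graph); (b) the price dynamics give 0 = -p_{g,i}* + φ_i + p_{ℓ,i} - (D_c ν*)_i for each i, where 𝟙ᵀ D_c = 0 and Σ_i φ_i = Φ; (c) the power balance gives 0 = -A_i ω_i* + p_{g,i}* - p_{ℓ,i} - p_i for i ∈ V_GI and 0 = -A_i ω_i* - p_{ℓ,i} - p_i for i ∈ V_L, with Σ_{i∈V} p_i = Φ and p_{g,i}* = 0 for i ∈ V_L. Then ω_i* = 0 for all i ∈ V. -/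
import Mathlib


/-- Zero Frequency Deviation. -/
theorem stmt2 {V E C : Type*} [Fintype V] [Fintype E] [Fintype C] [Nonempty V]
    [DecidableEq V]
    (Dp : Matrix V E ℝ) (G : SimpleGraph V) (hG : G.Connected)
    (hInc : ∀ e : E, ∃ i j : V, G.Adj i j ∧ Dp i e = 1 ∧ Dp j e = -1 ∧
      ∀ k : V, k ≠ i → k ≠ j → Dp k e = 0)
    (hEdge : ∀ i j : V, G.Adj i j → ∃ e : E,
      (Dp i e = 1 ∧ Dp j e = -1 ∧ ∀ k : V, k ≠ i → k ≠ j → Dp k e = 0) ∨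
      (Dp j e = 1 ∧ Dp i e = -1 ∧ ∀ k : V, k ≠ i → k ≠ j → Dp k e = 0))
    (VGI : Set V) [DecidablePred (· ∈ VGI)]
    (A : V → ℝ) (hA : ∀ i, 0 < A i)
    (ω pg pl p φ : V → ℝ) (Dc : Matrix V C ℝ) (ν : C → ℝ) (Φ : ℝ)
    -- (a) angle dynamics at equilibrium: frequency synchronization
    (ha : Dp.transpose.mulVec ω = 0)
    -- (b) price dynamics at equilibrium
    (hb : ∀ i : V, 0 = -pg i + φ i + pl i - Dc.mulVec ν i)
    (hDc : ∀ c : C, ∑ i : V, Dc i c = 0)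
    (hφ : ∑ i : V, φ i = Φ)
    -- (c) power balance at equilibrium
    (hcGI : ∀ i ∈ VGI, 0 = -A i * ω i + pg i - pl i - p i)
    (hcL : ∀ i ∉ VGI, 0 = -A i * ω i - pl i - p i)
    (hp : ∑ i : V, p i = Φ)
    (hgL : ∀ i ∉ VGI, pg i = 0) :
    ∀ i : V, ω i = 0 := by
  -- Step 1: ω is constant on the connected graph.
  have hadj : ∀ i j : V, G.Adj i j → ω i = ω j := by
    intro i j hij
    have hne : i ≠ j := hij.ne
    obtain ⟨e, he⟩ := hEdge i j hij
    have hsum : ∑ k : V, Dp k e * ω k = 0 := by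
      have := congrFun ha e
      simpa [Matrix.mulVec, Matrix.transpose, dotProduct, mul_comm] using this
    rcases he with ⟨h1, h2, h0⟩ | ⟨h1, h2, h0⟩
    · have : ∑ k : V, Dp k e * ω k = ω i - ω j := by
        rw [← Finset.sum_subset (Finset.subset_univ ({i, j} : Finset V))]
        · rw [Finset.sum_pair hne, h1, h2]; ring
        · intro k _ hk
          simp only [Finset.mem_insert, Finset.mem_singleton, not_or] at hk
          rw [h0 k hk.1 hk.2]; ring
      linarith [hsum, this]
    · have : ∑ k : V, Dp k e * ω k = ω j - ω i := by
        rw [← Finset.sum_subset (Finset.subset_univ ({i, j} : Finset V))]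
        · rw [Finset.sum_pair hne, h1, h2]; ring
        · intro k _ hk
          simp only [Finset.mem_insert, Finset.mem_singleton, not_or] at hk
          rw [h0 k hk.1 hk.2]; ring
      linarith [hsum, this]
  obtain ⟨i0⟩ := ‹Nonempty V›
  have hconst : ∀ i : V, ω i = ω i0 := by
    intro i
    obtain ⟨w⟩ := (hG i0 i).symm
    induction w with
    | nil => rfl
    | cons h _ ih => exact (hadj _ _ h).trans ih
  -- Step 2: ∑ A i * ω i = 0.
  have hAω : ∀ i : V, A i * ω i = pg i - pl i - p i := by
    intro i
    by_cases hi : i ∈ VGI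
    · have := hcGI i hi; linarith
    · have := hcL i hi; have := hgL i hi; linarith
  have hDcsum : ∑ i : V, Dc.mulVec ν i = 0 := by
    simp only [Matrix.mulVec, dotProduct]
    rw [Finset.sum_comm]
    simp only [← Finset.sum_mul, hDc, zero_mul, Finset.sum_const_zero]
  have hpg : ∑ i : V, pg i = Φ + ∑ i : V, pl i := by
    have h1 : ∑ i : V, (-pg i + φ i + pl i - Dc.mulVec ν i) = 0 := by
      rw [show (0:ℝ) = ∑ _i : V, (0:ℝ) by simp]
      exact Finset.sum_congr rfl fun i _ => (hb i).symm
    simp only [Finset.sum_sub_distrib, Finset.sum_add_distrib, Finset.sum_neg_distrib] at h1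
    rw [hφ, hDcsum] at h1
    linarith
  have hsumAω : ∑ i : V, A i * ω i = 0 := by
    rw [Finset.sum_congr rfl fun i _ => hAω i]
    simp only [Finset.sum_sub_distrib]
    rw [hpg, hp]
    ring
  -- Step 3: conclude.
  have hsumA : 0 < ∑ i : V, A i := Finset.sum_pos (fun i _ => hA i) Finset.univ_nonempty
  have : (∑ i : V, A i) * ω i0 = 0 := by
    rw [Finset.sum_mul]
    rw [← hsumAω]
    exact Finset.sum_congr rfl fun i _ => by rw [hconst i]
  have h0 : ω i0 = 0 := by
    rcases mul_eq_zero.mp this with h | h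
    · exact absurd h (ne_of_gt hsumA)
    · exact h
  intro i; rw [hconst i, h0]
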